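/- arXiv:1704.00772 — 2 statements merged into one kernel-verified Lean document; each statement's English description precedes it below -/
import Mathlib

section
/- Let A be an algebra obtained by the Cayley-Dickson process over K (char K ≠ 2) with trace form T_C, and let m be a positive integer. If the quadratic form (m+1) × T_C is anisotropic over K, then the sublevel of A satisfies s̲(A) ≥ m+1; equivalently, if s̲(A) < m+1 then (m+1) × T_C is isotropic. -/
/-- An algebra `A` of dimension `2 ^ t` over a field `K` obtained by the Cayley-Dickson
process: it has a basis `{1, f₂, …, f_q}`, `q = 2 ^ t` (indexed here by
`Option (Fin (2 ^ t - 1))`, with `none` corresponding to the unit `1`), such that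
`fᵢ² = αᵢ • 1` for nonzero scalars `αᵢ` and `fᵢ fⱼ = -fⱼ fᵢ` for `i ≠ j`.  The
multiplication is not assumed associative, but is `K`-bilinear. -/
structure CayleyDickson (K : Type) [Field K] (A : Type) [NonAssocRing A] [Module K A]
    (t : ℕ) : Type where
  smul_mul : ∀ (c : K) (x y : A), (c • x) * y = c • (x * y)
  mul_smul : ∀ (c : K) (x y : A), x * (c • y) = c • (x * y)
  b : Module.Basis (Option (Fin (2 ^ t - 1))) K A
  bOne : b none = 1
  α : Fin (2 ^ t - 1) → K
  α_ne_zero : ∀ i, α i ≠ 0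
  sq : ∀ i, b (some i) * b (some i) = α i • (1 : A)
  anticomm : ∀ i j, i ≠ j → b (some i) * b (some j) = -(b (some j) * b (some i))

/-- The level of a (not necessarily associative) unital ring `A`: the least `n` (in `ℕ∞`)
such that `-1` is a sum of `n` squares in `A`. -/
noncomputable def naLevel (A : Type) [NonAssocRing A] : ℕ∞ :=
  sInf {e : ℕ∞ | ∃ n : ℕ, e = n ∧ ∃ f : Fin n → A, ∑ i, f i * f i = -1}

/-- The sublevel of a (not necessarily associative) unital ring `A`: the least `n` (in
`ℕ∞`) such that `0` is a sum of `n + 1` nonzero squares in `A`. -/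
noncomputable def naSublevel (A : Type) [NonAssocRing A] : ℕ∞ :=
  sInf {e : ℕ∞ | ∃ n : ℕ, e = n ∧
    ∃ f : Fin (n + 1) → A, (∀ i, f i * f i ≠ 0) ∧ ∑ i, f i * f i = 0}

/-!
Comparing the coefficients of `1` turns a relation `f₀² + ⋯ + fₙ² = 0` in `A` into a zero of
`(n + 1) × T_C`: the scalar part of `x²` is `T_C` at the coordinates of `x`, since the cross terms
`cᵢcⱼ(fᵢfⱼ + fⱼfᵢ)` vanish by anticommutativity and `fᵢ · 1 + 1 · fᵢ` has no scalar part.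
Padding with zeros, this is a zero of `(m + 1) × T_C` when `n ≤ m`, so anisotropy forces `f₀ = 0`.
-/

open Finset

theorem Fintype.sum_sum_eq_sum_diag_of_skew {ι M : Type*} [Fintype ι] [AddCommGroup M]
    (F : ι → ι → M) (hF : ∀ i j, i ≠ j → F j i = -F i j) :
    ∑ i, ∑ j, F i j = ∑ i, F i i := by
  classical
  let G : ι × ι → M := fun p => if p.1 = p.2 then 0 else F p.1 p.2
  have hG : ∑ p, G p = 0 :=
    sum_ninvolution Prod.swap
      (fun p => by by_cases h : p.1 = p.2 <;> simp [G, h, eq_comm, hF p.1 p.2])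
      (fun p hp h => hp (by simp [G, show p.1 = p.2 from congrArg Prod.snd h]))
      (fun _ => mem_univ _) Prod.swap_swap
  calc ∑ i, ∑ j, F i j = ∑ i, ∑ j, G (i, j) + ∑ i, ∑ j, if i = j then F i j else 0 := by
        rw [← sum_add_distrib]
        refine Finset.sum_congr rfl fun i _ => ?_
        rw [← sum_add_distrib]
        refine Finset.sum_congr rfl fun j _ => ?_
        by_cases h : i = j <;> simp [G, h]
    _ = ∑ i, F i i := by
        rw [← Fintype.sum_prod_type G, hG, zero_add]
        simp

/-- `m × Q` is anisotropic. -/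
def IsAnisotropicMultiple {V M : Type*} [Zero V] [AddCommMonoid M] (Q : V → M) (m : ℕ) : Prop :=
  ∀ v : Fin m → V, ∑ j, Q (v j) = 0 → v = 0

theorem IsAnisotropicMultiple.mono {V M : Type*} [Zero V] [AddCommMonoid M] {Q : V → M}
    (hQ : Q 0 = 0) {m n : ℕ} (h : IsAnisotropicMultiple Q m) (hnm : n ≤ m) :
    IsAnisotropicMultiple Q n := by
  intro w hw
  have hinj : Function.Injective (Fin.castLE hnm) := Fin.castLE_injective hnm
  have hv := h (Function.extend (Fin.castLE hnm) w 0) <| by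
    rw [← hw]
    refine (Fintype.sum_of_injective _ hinj _ _ (fun j hj => ?_) fun i => ?_).symm
    · rw [Function.extend_apply' _ _ _ hj, Pi.zero_apply, hQ]
    · rw [hinj.extend_apply]
  funext i
  simpa [hinj.extend_apply] using congrFun hv (Fin.castLE hnm i)

namespace CayleyDickson

variable {K A : Type} [Field K] [NonAssocRing A] [Module K A] {t : ℕ} (CD : CayleyDickson K A t)

/-- The trace form `T_C = <1, α₂, …, α_q>`. -/
def traceForm (v : K × (Fin (2 ^ t - 1) → K)) : K :=
  v.1 ^ 2 + ∑ i, CD.α i * v.2 i ^ 2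

noncomputable def coords (x : A) : K × (Fin (2 ^ t - 1) → K) :=
  (CD.b.repr x none, fun i => CD.b.repr x (some i))

@[simp]
theorem traceForm_zero : CD.traceForm 0 = 0 := by
  simp [traceForm]

theorem coords_eq_zero_iff {x : A} : CD.coords x = 0 ↔ x = 0 := by
  refine ⟨fun h => CD.b.repr.map_eq_zero_iff.mp ?_, fun h => by simp [coords, h, Prod.ext_iff, funext_iff]⟩
  ext (_ | i)
  · exact congrArg Prod.fst h
  · exact congrFun (congrArg Prod.snd h) i

theorem mul_self_eq_sum (x : A) :
    x * x = ∑ k, ∑ l, (CD.b.repr x k * CD.b.repr x l) • (CD.b k * CD.b l) := by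
  conv_lhs => rw [← CD.b.sum_repr x, sum_mul]
  simp only [mul_sum, CD.smul_mul, CD.mul_smul, smul_sum, smul_smul]

theorem repr_mul_basis_none_of_ne {k l : Option (Fin (2 ^ t - 1))} (h : k ≠ l) :
    CD.b.repr (CD.b l * CD.b k) none = -CD.b.repr (CD.b k * CD.b l) none := by
  rcases k with _ | i <;> rcases l with _ | j
  · exact absurd rfl h
  · simp [CD.bOne]
  · simp [CD.bOne]
  · rw [CD.anticomm j i fun hji => h (by rw [hji]), map_neg, Finsupp.neg_apply]

theorem repr_mul_basis_self_none (k : Option (Fin (2 ^ t - 1))) :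
    CD.b.repr (CD.b k * CD.b k) none = k.elim 1 CD.α := by
  rcases k with _ | i
  · rw [CD.bOne, mul_one, ← CD.bOne]
    simp
  · rw [CD.sq, ← CD.bOne]
    simp

theorem repr_mul_self_none (x : A) : CD.b.repr (x * x) none = CD.traceForm (CD.coords x) := by
  rw [CD.mul_self_eq_sum]
  simp only [map_sum, map_smul, Finsupp.finsetSum_apply, Finsupp.smul_apply, smul_eq_mul]
  rw [Fintype.sum_sum_eq_sum_diag_of_skew _ fun k l h => by
      rw [CD.repr_mul_basis_none_of_ne h]; ring]
  simp only [repr_mul_basis_self_none, Fintype.sum_option, Option.elim, traceForm, coords]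
  congr 1
  · ring
  · exact Finset.sum_congr rfl fun i _ => by ring

end CayleyDickson

theorem sublevel_ge_of_anisotropic_general (K A : Type) [Field K] [NonAssocRing A] [Module K A]
    (t m : ℕ) (CD : CayleyDickson K A t)
    (han : ∀ v : Fin (m + 1) → K × (Fin (2 ^ t - 1) → K),
      ∑ j, ((v j).1 ^ 2 + ∑ i, CD.α i * (v j).2 i ^ 2) = 0 → v = 0) :
    ((m + 1 : ℕ) : ℕ∞) ≤ naSublevel A := by
  refine le_sInf ?_
  rintro _ ⟨n, rfl, f, hf, hsum⟩
  by_contra! hlt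
  have hscalar : ∑ j, CD.traceForm (CD.coords (f j)) = 0 := by
    simp only [← CD.repr_mul_self_none, ← Finsupp.finsetSum_apply, ← map_sum, hsum, map_zero,
      Finsupp.coe_zero, Pi.zero_apply]
  have hanis : IsAnisotropicMultiple CD.traceForm (n + 1) :=
    IsAnisotropicMultiple.mono CD.traceForm_zero han (by exact_mod_cast hlt)
  have hf0 : CD.coords (f 0) = 0 := congrFun (hanis (CD.coords ∘ f) hscalar) 0
  exact hf 0 (by rw [CD.coords_eq_zero_iff.mp hf0, mul_zero])

/-- If the quadratic form `(m + 1) × T_C` (with `T_C = <1, α₂, …, α_q>`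
the trace form of the Cayley-Dickson algebra `A`) is anisotropic over `K`, then the
sublevel of `A` satisfies `s̲(A) ≥ m + 1`. -/
theorem sublevel_ge_of_anisotropic (K A : Type) [Field K] [NonAssocRing A] [Module K A]
    (t m : ℕ) (hm : 0 < m) (hchar : (2 : K) ≠ 0) (CD : CayleyDickson K A t)
    (han : ∀ v : Fin (m + 1) → K × (Fin (2 ^ t - 1) → K),
      ∑ j, ((v j).1 ^ 2 + ∑ i, CD.α i * (v j).2 i ^ 2) = 0 → v = 0) :
    ((m + 1 : ℕ) : ℕ∞) ≤ naSublevel A :=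
  sublevel_ge_of_anisotropic_general K A t m CD han
end

section
/- Let n = 2^k·r with r odd, and let A_t be a Cayley-Dickson algebra over K with trace form T_C = <1> ⊥ T_P. If the quadratic form (2^k + 1) × <1> ⊥ (n-1) × T_P is isotropic over K, then the level of A_t satisfies s(A_t) ≤ n. -/
/-!
Since the `fᵢ` anticommute, the square of `c • 1 + ∑ yᵢ fᵢ` is
`(c² + T_P(y)) • 1 + 2c ∑ yᵢ fᵢ`. Hence `-1` is a sum of `n` squares as soon as there is an
`n × 2^t` coordinate matrix `W = (c | y)` whose Gram matrix `WᵀW` has `T_C`-weighted trace `-1`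
and vanishing mixed entries `(WᵀW)ᵢ₀`.

Such a `W` is built from an isotropic vector `(x, y)`. If `x = 0`, the form `(n-1) × T_P` is
isotropic, hence universal, and represents `-1`. Otherwise, after scaling a nonzero `x_{j₀}` to `1`,
`-1 = N (c² + (n-1)T_P(z))` where `N` is a sum of `2^k` squares (`N = e⁻¹` for `e` the sum of the
other squares `x_j²`, or `N = 1, c = 0` if `e = 0`). Because `2^k × ⟨1⟩` is a Pfister form, `N` is
the multiplier of a `2^k × 2^k` matrix `R` with `RᵀR = RRᵀ = N`, obtained by repeated doubling; `r`
diagonal copies of `R` give an `n × n` matrix `S` with `SᵀS = N`. Then `W = S W₀`, where `W₀` has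
rows `(c, 0)` and `(0, z_l)`, has Gram matrix `N • W₀ᵀW₀`, which is as required.
-/

theorem Finset.sum_sum_eq_sum_of_antisymm {ι M : Type*} [DecidableEq ι] [AddCommGroup M]
    (s : Finset ι) (g : ι → ι → M) (hg : ∀ i j, i ≠ j → g i j = -g j i) :
    ∑ i ∈ s, ∑ j ∈ s, g i j = ∑ i ∈ s, g i i := by
  have hoff : ∑ p ∈ s.offDiag, g p.1 p.2 = 0 :=
    Finset.sum_involution (fun p _ => p.swap)
      (fun p hp => by
        rw [hg _ _ (mem_offDiag.mp hp).2.2, Prod.fst_swap, Prod.snd_swap, neg_add_cancel])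
      (fun p hp _ => by simpa [Prod.ext_iff, eq_comm] using (mem_offDiag.mp hp).2.2)
      (fun p hp => by grind)
      (fun p _ => p.swap_swap)
  rw [← Finset.sum_product', ← Finset.diag_union_offDiag,
    Finset.sum_union (Finset.disjoint_diag_offDiag _), Finset.sum_diag, hoff, add_zero]

namespace QuadraticMap

variable {K V : Type*} [Field K] [AddCommGroup V] [Module K V]

theorem surjective_of_not_anisotropic {Q : QuadraticForm K V} (hQ : Q.radical = ⊥)
    (hiso : ¬Q.Anisotropic) : Function.Surjective Q := by
  obtain ⟨v, hv0, hv⟩ := (not_anisotropic_iff_exists Q).mp hiso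
  have hvrad : v ∉ Q.radical := by simpa [hQ] using hv0
  obtain ⟨u, hu⟩ : ∃ u, Q (v + u) ≠ Q u := by
    simpa [mem_radical_iff', hv] using hvrad
  have hpolar : polar Q v u ≠ 0 := by rwa [polar, hv, sub_zero, sub_ne_zero]
  intro d
  refine ⟨((d - Q u) / polar Q v u) • v + u, ?_⟩
  rw [QuadraticMap.map_add (⇑Q), QuadraticMap.map_smul, hv, polar_smul_left]
  simp only [smul_eq_mul, mul_zero, zero_add, div_mul_cancel₀ _ hpolar, add_sub_cancel]

end QuadraticMap

theorem QuadraticForm.radical_weightedSumSquares_eq_bot {K ι : Type*} [Field K] [NeZero (2 : K)]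
    [Fintype ι] {w : ι → K} (hw : ∀ i, w i ≠ 0) :
    (QuadraticMap.weightedSumSquares K w).radical = ⊥ := by
  rw [QuadraticForm.radical_weightedSumSquares, eq_bot_iff]
  intro v hv
  simp_all [Pi.mem_spanSubset_iff]
  exact funext hv

theorem exists_sum_sq_mul_eq_neg_one_of_isotropic {K V : Type*} [Field K] [AddCommGroup V]
    [Module K V] {Q : QuadraticForm K V} (hQ : Q.radical = ⊥) {p : ℕ} [NeZero p]
    (x : Fin (p + 1) → K) (y : V) (hxy : x ≠ 0 ∨ y ≠ 0) (h : ∑ j, x j ^ 2 + Q y = 0) :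
    ∃ (u : Fin p → K) (c : K) (z : V), (∑ j, u j ^ 2) * (c ^ 2 + Q z) = -1 := by
  have of_eq_neg_one : ∀ z, Q z = -1 → ∃ (u : Fin p → K) (c : K) (z : V),
      (∑ j, u j ^ 2) * (c ^ 2 + Q z) = -1 := fun z hz =>
    ⟨Pi.single 0 1, 0, z, by simp [hz, Pi.single_apply, ite_pow]⟩
  by_cases hx : x = 0
  · refine of_eq_neg_one _ (QuadraticMap.surjective_of_not_anisotropic hQ ?_ (-1)).choose_spec
    rw [QuadraticMap.not_anisotropic_iff_exists]
    exact ⟨y, hxy.resolve_left (not_not.mpr hx), by simpa [hx] using h⟩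
  obtain ⟨j₀, hj₀⟩ : ∃ j, x j ≠ 0 := Function.ne_iff.mp hx
  rw [Fin.sum_univ_succAbove _ j₀] at h
  set e := ∑ j : Fin p, x (j₀.succAbove j) ^ 2
  have hQy : Q ((x j₀)⁻¹ • y) = -1 - e / x j₀ ^ 2 := by
    rw [QuadraticMap.map_smul, show Q y = -x j₀ ^ 2 - e by linear_combination h, smul_eq_mul]
    field_simp
  by_cases he : e = 0
  · exact of_eq_neg_one _ (by rw [hQy, he, zero_div, sub_zero])
  refine ⟨fun j => x j₀ * x (j₀.succAbove j) / e, 1, (x j₀)⁻¹ • y, ?_⟩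
  simp only [div_pow, mul_pow, ← Finset.sum_div, ← Finset.mul_sum, hQy]
  field_simp
  ring

namespace Matrix

variable {K ι : Type*} [Field K] [DecidableEq ι]

theorem smul_one_eq_fromBlocks (e : K) :
    (e • 1 : Matrix (ι ⊕ ι) (ι ⊕ ι) K) = fromBlocks (e • 1) 0 0 (e • 1) := by
  rw [← fromBlocks_one, fromBlocks_smul, smul_zero]

variable [Fintype ι]

def IsSimilitude (R : Matrix ι ι K) (e : K) : Prop :=
  Rᵀ * R = e • 1 ∧ R * Rᵀ = e • 1

theorem isSimilitude_smul_one (c : K) : IsSimilitude (c • 1 : Matrix ι ι K) (c ^ 2) := by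
  constructor <;> simp [smul_smul, sq]

namespace IsSimilitude

variable {R : Matrix ι ι K} {e : K}

theorem transpose_mul_cancel_left (h : IsSimilitude R e) {κ : Type*} (X : Matrix ι κ K) :
    Rᵀ * (R * X) = e • X := by
  rw [← Matrix.mul_assoc, h.1, smul_mul, Matrix.one_mul]

theorem mul_transpose_cancel_left (h : IsSimilitude R e) {κ : Type*} (X : Matrix ι κ K) :
    R * (Rᵀ * X) = e • X := by
  rw [← Matrix.mul_assoc, h.2, smul_mul, Matrix.one_mul]

theorem reindex (h : IsSimilitude R e) {κ : Type*} [Fintype κ] [DecidableEq κ] (σ : ι ≃ κ) :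
    IsSimilitude (reindex σ σ R) e := by
  constructor <;> simp [h.1, h.2, submatrix_smul, submatrix_one_equiv]

theorem blockDiagonal (h : IsSimilitude R e) (o : Type*) [Fintype o] [DecidableEq o] :
    IsSimilitude (blockDiagonal fun _ : o => R) e := by
  constructor <;>
    rw [blockDiagonal_transpose, ← blockDiagonal_mul, ← blockDiagonal_one, ← blockDiagonal_smul]
  exacts [congrArg _ (funext fun _ => h.1), congrArg _ (funext fun _ => h.2)]

theorem fromBlocks_zero (h : IsSimilitude R e) : IsSimilitude (fromBlocks R 0 0 R) e := by
  constructor <;>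
    simp [fromBlocks_transpose, fromBlocks_multiply, h.1, h.2, smul_one_eq_fromBlocks]

/-- The upper-right block `C` is forced by `AᵀC + BᵀA = 0`, since `(Aᵀ)⁻¹ = a⁻¹ A`. -/
theorem fromBlocks {A B : Matrix ι ι K} {a b : K} (ha : a ≠ 0)
    (hA : IsSimilitude A a) (hB : IsSimilitude B b) :
    IsSimilitude (fromBlocks A (-(a⁻¹ • (A * Bᵀ * A))) B A) (a + b) := by
  have hinv : a⁻¹ * (a⁻¹ * (a * b * a)) = b := by field_simp
  constructor <;>
    rw [fromBlocks_transpose, fromBlocks_multiply, smul_one_eq_fromBlocks, fromBlocks_inj] <;>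
    refine ⟨?_, ?_, ?_, ?_⟩ <;>
    simp only [transpose_neg, transpose_smul, transpose_mul, transpose_transpose, Matrix.mul_neg,
      Matrix.neg_mul, Matrix.mul_smul, Matrix.smul_mul, Matrix.mul_assoc, Matrix.mul_one,
      hA.transpose_mul_cancel_left, hA.mul_transpose_cancel_left, hA.1, hA.2,
      hB.transpose_mul_cancel_left, hB.mul_transpose_cancel_left, hB.1, hB.2,
      smul_smul, inv_mul_cancel₀ ha, one_smul]
  all_goals
    simp only [smul_neg, neg_neg, smul_smul, ← add_smul, neg_add_cancel, add_neg_cancel,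
      hinv, add_comm b a]

end IsSimilitude

theorem exists_isSimilitude_sum_sq (k : ℕ) (u : Fin (2 ^ k) → K) :
    ∃ R : Matrix (Fin (2 ^ k)) (Fin (2 ^ k)) K, IsSimilitude R (∑ j, u j ^ 2) := by
  induction k with
  | zero => exact ⟨u 0 • 1, by simpa using isSimilitude_smul_one (u 0)⟩
  | succ k ih =>
    let σ : Fin (2 ^ k) ⊕ Fin (2 ^ k) ≃ Fin (2 ^ (k + 1)) :=
      finSumFinEquiv.trans (finCongr (by ring))
    obtain ⟨A, hA⟩ := ih fun j => u (σ (.inl j))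
    obtain ⟨B, hB⟩ := ih fun j => u (σ (.inr j))
    have hsum : ∑ j, u j ^ 2 = ∑ j, u (σ (.inl j)) ^ 2 + ∑ j, u (σ (.inr j)) ^ 2 := by
      rw [← Fintype.sum_sum_type (fun s => u (σ s) ^ 2), Equiv.sum_comp σ (fun j => u j ^ 2)]
    rw [hsum]
    by_cases ha : ∑ j, u (σ (.inl j)) ^ 2 = 0
    · rw [ha, zero_add]
      exact ⟨_, hB.fromBlocks_zero.reindex σ⟩
    · exact ⟨_, (hA.fromBlocks ha hB).reindex σ⟩

theorem exists_transpose_mul_self_eq_sum_sq_smul_one {k r : ℕ}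
    (hι : Fintype.card ι = 2 ^ k * r) (u : Fin (2 ^ k) → K) :
    ∃ S : Matrix ι ι K, Sᵀ * S = (∑ j, u j ^ 2) • 1 := by
  obtain ⟨R, hR⟩ := exists_isSimilitude_sum_sq k u
  let σ : Fin (2 ^ k) × Fin r ≃ ι := Fintype.equivOfCardEq (by simp [hι])
  exact ⟨_, ((hR.blockDiagonal (Fin r)).reindex σ).1⟩

end Matrix

open Matrix in
theorem exists_gram_of_sum_sq_mul_eq_neg_one {K κ : Type*} [Field K] [Fintype κ] (w : κ → K)
    {m k r : ℕ} (hm : m + 1 = 2 ^ k * r) (u : Fin (2 ^ k) → K) (c : K) (z : Fin m × κ → K)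
    (h : (∑ j, u j ^ 2) *
      (c ^ 2 + QuadraticMap.weightedSumSquares K (fun p : Fin m × κ => w p.2) z) = -1) :
    ∃ W : Matrix (Fin (m + 1)) (Option κ) K,
      (Wᵀ * W) none none + ∑ i, w i * (Wᵀ * W) (some i) (some i) = -1 ∧
        ∀ i, (Wᵀ * W) (some i) none = 0 := by
  obtain ⟨S, hS⟩ := exists_transpose_mul_self_eq_sum_sq_smul_one (ι := Fin (m + 1))
    (by rw [Fintype.card_fin, hm]) u
  let W₀ : Matrix (Fin (m + 1)) (Option κ) K :=
    Fin.cons (fun o => o.elim c 0) fun l o => o.elim 0 fun i => z (l, i)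
  have hG : (S * W₀)ᵀ * (S * W₀) = (∑ j, u j ^ 2) • (W₀ᵀ * W₀) := by
    rw [transpose_mul, Matrix.mul_assoc, ← Matrix.mul_assoc Sᵀ, hS, smul_mul, Matrix.one_mul,
      Matrix.mul_smul]
  have hgram : ∀ a b, (W₀ᵀ * W₀) a b = W₀ 0 a * W₀ 0 b + ∑ l : Fin m, W₀ l.succ a * W₀ l.succ b :=
    fun a b => by rw [mul_apply, Fin.sum_univ_succ]; rfl
  have h₀ : ∀ o, W₀ 0 o = o.elim c 0 := fun _ => rfl
  have hsucc : ∀ l o, W₀ l.succ o = o.elim 0 fun i => z (l, i) := fun _ _ => rfl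
  clear_value W₀
  refine ⟨S * W₀, ?_, fun i => ?_⟩
  · rw [← h, hG]
    simp [hgram, h₀, hsucc, Fintype.sum_prod_type_right, Finset.mul_sum, mul_add, mul_left_comm,
      pow_two]
  · rw [hG]
    simp [hgram, h₀, hsucc]

namespace CayleyDickson

variable {K A : Type} [Field K] [NonAssocRing A] [Module K A] {t : ℕ}

theorem smul_mul_smul (CD : CayleyDickson K A t) (c d : K) (x y : A) :
    (c • x) * (d • y) = (c * d) • (x * y) := by
  rw [CD.smul_mul, CD.mul_smul, smul_smul]

variable (CD : CayleyDickson K A t)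

theorem sum_smul_mul_self (Y : Fin (2 ^ t - 1) → K) :
    (∑ i, Y i • CD.b (some i)) * (∑ i, Y i • CD.b (some i)) = (∑ i, CD.α i * Y i ^ 2) • 1 := by
  rw [Finset.sum_mul_sum, Finset.sum_sum_eq_sum_of_antisymm]
  · simp only [CD.smul_mul_smul, CD.sq, smul_smul, Finset.sum_smul]
    exact Finset.sum_congr rfl fun i _ => by rw [mul_comm, pow_two]
  · intro i j hij
    rw [CD.smul_mul_smul, CD.smul_mul_smul, CD.anticomm i j hij, mul_comm, smul_neg]

theorem sum_smul_mul_self_option (v : Option (Fin (2 ^ t - 1)) → K) :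
    (∑ o, v o • CD.b o) * (∑ o, v o • CD.b o) =
      (v none ^ 2 + ∑ i, CD.α i * v (some i) ^ 2) • 1 +
        (2 * v none) • ∑ i, v (some i) • CD.b (some i) := by
  rw [Fintype.sum_option, CD.bOne, add_mul, mul_add, mul_add, CD.sum_smul_mul_self,
    CD.smul_mul_smul, one_mul, CD.smul_mul, CD.mul_smul, one_mul, mul_one]
  module

open Matrix in
theorem sum_mul_self_eq_neg_one {ι : Type*} [Fintype ι]
    (W : Matrix ι (Option (Fin (2 ^ t - 1))) K)
    (h₁ : (Wᵀ * W) none none + ∑ i, CD.α i * (Wᵀ * W) (some i) (some i) = -1)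
    (h₂ : ∀ i, (Wᵀ * W) (some i) none = 0) :
    ∑ m, (∑ o, W m o • CD.b o) * (∑ o, W m o • CD.b o) = -1 := by
  have hscalar : ∑ m, (W m none ^ 2 + ∑ i, CD.α i * W m (some i) ^ 2) =
      (Wᵀ * W) none none + ∑ i, CD.α i * (Wᵀ * W) (some i) (some i) := by
    simp only [Finset.sum_add_distrib, mul_apply, transpose_apply, Finset.mul_sum, pow_two]
    rw [Finset.sum_comm]
  have hpure : ∑ m, (2 * W m none) • ∑ i, W m (some i) • CD.b (some i) = 0 := by
    simp_rw [Finset.smul_sum, smul_smul]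
    rw [Finset.sum_comm]
    refine Finset.sum_eq_zero fun i _ => ?_
    have hi := h₂ i
    simp only [mul_apply, transpose_apply] at hi
    simp [← Finset.sum_smul, mul_assoc, ← Finset.mul_sum, mul_comm (W _ none), hi]
  simp_rw [CD.sum_smul_mul_self_option]
  rw [Finset.sum_add_distrib, ← Finset.sum_smul, hscalar, h₁, hpure, add_zero, neg_one_smul]

end CayleyDickson

theorem level_le_n_of_isotropic_general (K A : Type) [Field K] [NonAssocRing A] [Module K A]
    (t n k r : ℕ) (hchar : (2 : K) ≠ 0) (CD : CayleyDickson K A t)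
    (hn : n = 2 ^ k * r) (hn0 : 0 < n)
    (hiso : ∃ (x : Fin (2 ^ k + 1) → K) (y : Fin (n - 1) → Fin (2 ^ t - 1) → K),
      (x ≠ 0 ∨ y ≠ 0) ∧
      ∑ j, x j ^ 2 + ∑ m, ∑ i, CD.α i * y m i ^ 2 = 0) :
    ∃ f : Fin n → A, ∑ i, f i * f i = -1 := by
  obtain ⟨m, rfl⟩ : ∃ m, n = m + 1 := ⟨n - 1, by omega⟩
  obtain ⟨x, y, hxy, hsum⟩ := hiso
  have : NeZero (2 : K) := ⟨hchar⟩
  obtain ⟨u, c, z, hz⟩ := exists_sum_sq_mul_eq_neg_one_of_isotropic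
    (QuadraticForm.radical_weightedSumSquares_eq_bot
      (w := fun p : Fin m × Fin (2 ^ t - 1) => CD.α p.2) fun p => CD.α_ne_zero p.2)
    x (Function.uncurry y) (hxy.imp_right fun hy h => hy (funext₂ fun l i => congrFun h (l, i)))
    (by simpa [Fintype.sum_prod_type, pow_two] using hsum)
  obtain ⟨W, h₁, h₂⟩ := exists_gram_of_sum_sq_mul_eq_neg_one CD.α hn u c z hz
  exact ⟨_, CD.sum_mul_self_eq_neg_one W h₁ h₂⟩

/-- Let `n = 2 ^ k · r` with `r` odd.  If the quadratic form
`(2 ^ k + 1) × <1> ⊥ (n - 1) × T_P` is isotropic over `K`, then the level of the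
Cayley-Dickson algebra `A_t` satisfies `s(A_t) ≤ n`, i.e. `-1` is a sum of `n` squares. -/
theorem level_le_n_of_isotropic (K A : Type) [Field K] [NonAssocRing A] [Module K A]
    (t n k r : ℕ) (hchar : (2 : K) ≠ 0) (CD : CayleyDickson K A t)
    (hn : n = 2 ^ k * r) (hr : Odd r) (hn0 : 0 < n)
    (hiso : ∃ (x : Fin (2 ^ k + 1) → K) (y : Fin (n - 1) → Fin (2 ^ t - 1) → K),
      (x ≠ 0 ∨ y ≠ 0) ∧
      ∑ j, x j ^ 2 + ∑ m, ∑ i, CD.α i * y m i ^ 2 = 0) :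
    ∃ f : Fin n → A, ∑ i, f i * f i = -1 :=
  level_le_n_of_isotropic_general K A t n k r hchar CD hn hn0 hiso
end
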